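/- Let a ∈ ℤ³ be primitive with framing basis (α₁,α₂,α₃), let x ∈ ℂ³ satisfy Im(α₂(x)/α₃(x)) > 0, let w ∈ ℂ, and let μ = m₁α₁+m₂α₂+m₃α₃ and ν = n₁α₁+n₂α₂+n₃α₃ be elements of ℤ³. Assume that θ₀((w'+jα₁(x))/α₃(x), α₂(x)/α₃(x)) ≠ 0 for w' ∈ {w, w+μ(x)} and every integer j with −|m₁|−|n₁| ≤ j ≤ |m₁|+|n₁| (so that all inverted factors are invertible). Then Δ_a(μ+ν; w, x) = e^{2πi·P_a(μ,ν;w,x)} · Δ_a(μ; w, x) · Δ_a(ν; w+μ(x), x), where P_a(μ,ν;w,x) = (n₁m₂/α₃(x)) · [ w + ((2m₁+n₁−1)/2)·α₁(x) + ((m₂−1)/2)·α₂(x) + (1/2)·α₃(x) ]. -/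

import Mathlib

/-!
`Δ_a(μ; w, x)` is the oriented product `∏_{0 ≤ j < m₁} F j` of `F j = θ₀(z_j, τ)`, where
`z_j = (w + jα₁(x))/α₃(x)` and `τ = α₂(x)/α₃(x)`, and oriented products satisfy Chasles' relation
`∏_{[0, m₁+n₁)} = ∏_{[0, m₁)} · ∏_{[m₁, m₁+n₁)}` as long as no factor vanishes. Translating `w` by
`μ(x)` replaces `z_j` by `z_{m₁+j} + m₃ + m₂τ`. Since `θ₀` is `1`-periodic and
`θ₀(z + τ, τ) = -e^{-2πiz} θ₀(z, τ)`, the factors of `Δ_a(ν; w + μ(x), x)` are those of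
`∏_{[m₁, m₁+n₁)} F` times exponentials of an affine function of `j`; their product is
`e^{-2πi P_a(μ,ν;w,x)}` up to the factor `e^{2πi n₁m₂} = 1`.
-/

namespace EGG

/-- Integer vectors in `ℤ³`. -/
abbrev V : Type := Fin 3 → ℤ

/-- gcd of the three coordinates. -/
def gcd3 (v : V) : ℕ := Nat.gcd (Nat.gcd (v 0).natAbs (v 1).natAbs) (v 2).natAbs

/-- A vector of `ℤ³` is primitive if it is nonzero and the gcd of its coordinates is 1. -/
def Primitive (a : V) : Prop := a ≠ 0 ∧ gcd3 a = 1

/-- Cross product of integer vectors. -/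
def cross (a b : V) : V :=
  ![a 1 * b 2 - a 2 * b 1, a 2 * b 0 - a 0 * b 2, a 0 * b 1 - a 1 * b 0]

/-- Dot product of integer vectors. -/
def dotZ (α a : V) : ℤ := α 0 * a 0 + α 1 * a 1 + α 2 * a 2

/-- Dot product of a rational vector with an integer vector. -/
def dotQ (α : Fin 3 → ℚ) (a : V) : ℚ := α 0 * (a 0 : ℚ) + α 1 * (a 1 : ℚ) + α 2 * (a 2 : ℚ)

/-- Dot product of a real vector with an integer vector. -/
def dotR (l : Fin 3 → ℝ) (a : V) : ℝ := l 0 * (a 0 : ℝ) + l 1 * (a 1 : ℝ) + l 2 * (a 2 : ℝ)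

/-- The pairing `α(x) = α₁x₁+α₂x₂+α₃x₃` of a rational vector with a complex vector. -/
noncomputable def pairQ (α : Fin 3 → ℚ) (x : Fin 3 → ℂ) : ℂ :=
  (α 0 : ℂ) * x 0 + (α 1 : ℂ) * x 1 + (α 2 : ℂ) * x 2

/-- The pairing `α(x) = α₁x₁+α₂x₂+α₃x₃` of an integer vector with a complex vector. -/
noncomputable def pairZ (α : V) (x : Fin 3 → ℂ) : ℂ :=
  (α 0 : ℂ) * x 0 + (α 1 : ℂ) * x 1 + (α 2 : ℂ) * x 2

/-- The canonical map `ℤ³ → ℚ³`. -/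
def toQ (a : V) : Fin 3 → ℚ := fun i => (a i : ℚ)

/-- Determinant of the 3×3 matrix with rows `α, β, δ`. -/
def det3Q (α β δ : Fin 3 → ℚ) : ℚ := Matrix.det (Matrix.of ![α, β, δ])

/-- `(α, β)` is an oriented basis of the plane `H(a) = {α : α·a = 0}`. -/
def IsOrientedBasis (a : V) (α β : Fin 3 → ℚ) : Prop :=
  dotQ α a = 0 ∧ dotQ β a = 0 ∧
  LinearIndependent ℚ ![α, β] ∧
  (∀ δ : Fin 3 → ℚ, dotQ δ a = 0 → ∃ p q : ℚ, δ = p • α + q • β) ∧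
  (∀ δ : Fin 3 → ℚ, 0 < dotQ δ a → 0 < det3Q α β δ)

/-- The domain `U⁺_a ⊆ ℂ³`. -/
noncomputable def UPlus (a : V) : Set (Fin 3 → ℂ) :=
  {x | ∃ α β : Fin 3 → ℚ, IsOrientedBasis a α β ∧
    0 < (pairQ α x * (starRingEnd ℂ) (pairQ β x)).im}

/-- `γ` is the direction vector of the wedge `(a,b)`: `γ` is primitive and
`a × b = s • γ` for some integer `s ≥ 1` (the modulus). -/
def IsDirVec (a b γ : V) : Prop :=
  Primitive γ ∧ ∃ s : ℤ, 1 ≤ s ∧ cross a b = s • γ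

/-- `C₊₋(a,b) = {δ ∈ ℤ³ : δ·a > 0, δ·b ≤ 0}`. -/
def Cpm (a b : V) : Set V := {δ | 0 < dotZ δ a ∧ dotZ δ b ≤ 0}

/-- `C₋₊(a,b) = {δ ∈ ℤ³ : δ·a ≤ 0, δ·b > 0}`. -/
def Cmp (a b : V) : Set V := {δ | dotZ δ a ≤ 0 ∧ 0 < dotZ δ b}

/-- The factor `1 - e^{-2πi(δ(x)-w)/γ(x)}` appearing in the numerator of `Γ_{a,b}`. -/
noncomputable def gammaFacP (γ : V) (x : Fin 3 → ℂ) (w : ℂ) (δ : V) : ℂ :=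
  1 - Complex.exp (-(2 * (Real.pi : ℂ) * Complex.I) * (pairZ δ x - w) / pairZ γ x)

/-- The factor `1 - e^{2πi(δ(x)-w)/γ(x)}` appearing in the denominator of `Γ_{a,b}`. -/
noncomputable def gammaFacM (γ : V) (x : Fin 3 → ℂ) (w : ℂ) (δ : V) : ℂ :=
  1 - Complex.exp ((2 * (Real.pi : ℂ) * Complex.I) * (pairZ δ x - w) / pairZ γ x)

/-- The gamma function `Γ_{a,b}(w,x)` of the wedge `(a,b)` with direction vector `γ`:
the products run over the sets `C₊₋(a,b)/ℤγ` and `C₋₊(a,b)/ℤγ`; each factor is evaluated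
on the chosen representative `Quotient.out q` of the class `q` (the factors are constant
on classes modulo `ℤγ`). -/
noncomputable def GammaWedge (a b γ : V) (w : ℂ) (x : Fin 3 → ℂ) : ℂ :=
  if a = b then 1 else
    (∏' q : (QuotientAddGroup.mk '' Cpm a b : Set (V ⧸ AddSubgroup.zmultiples γ)),
      gammaFacP γ x w (Quotient.out (q : V ⧸ AddSubgroup.zmultiples γ))) /
    (∏' q : (QuotientAddGroup.mk '' Cmp a b : Set (V ⧸ AddSubgroup.zmultiples γ)),
      gammaFacM γ x w (Quotient.out (q : V ⧸ AddSubgroup.zmultiples γ)))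

/-- The theta function `θ₀(z,τ)`, for `Im τ > 0`. -/
noncomputable def theta0 (z τ : ℂ) : ℂ :=
  ∏' j : ℕ, ((1 - Complex.exp (2 * (Real.pi : ℂ) * Complex.I * (((j : ℂ) + 1) * τ - z))) *
    (1 - Complex.exp (2 * (Real.pi : ℂ) * Complex.I * ((j : ℂ) * τ + z))))

/-- The elliptic gamma function `Γ(z,τ,σ)`, for `Im τ > 0` and `Im σ > 0`. -/
noncomputable def ellGamma (z τ σ : ℂ) : ℂ :=
  (∏' p : ℕ × ℕ, (1 - Complex.exp (2 * (Real.pi : ℂ) * Complex.I *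
      (((p.1 : ℂ) + 1) * τ + ((p.2 : ℂ) + 1) * σ - z)))) /
  (∏' p : ℕ × ℕ, (1 - Complex.exp (2 * (Real.pi : ℂ) * Complex.I *
      ((p.1 : ℂ) * τ + (p.2 : ℂ) * σ + z))))

/-- The elliptic gamma function `Γ̃(z,τ,σ)` in the domain `Im τ < 0 < Im σ`. -/
noncomputable def ellGammaTilde (z τ σ : ℂ) : ℂ :=
  (∏' p : ℕ × ℕ, (1 - Complex.exp (2 * (Real.pi : ℂ) * Complex.I *
      (z - ((p.1 : ℂ) + 1) * τ + (p.2 : ℂ) * σ)))) /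
  (∏' p : ℕ × ℕ, (1 - Complex.exp (2 * (Real.pi : ℂ) * Complex.I *
      (-z - (p.1 : ℂ) * τ + ((p.2 : ℂ) + 1) * σ))))

/-- The polynomial `P₂`. -/
noncomputable def P2 (w x₁ x₂ : ℂ) : ℂ :=
  (w ^ 2 - (x₁ + x₂) * w + (x₁ ^ 2 + x₂ ^ 2 + 3 * x₁ * x₂) / 6) / (x₁ * x₂)

/-- The Bernoulli polynomial `P₃ = B₃,₃`. -/
noncomputable def P3 (w x₁ x₂ x₃ : ℂ) : ℂ :=
  w ^ 3 / (x₁ * x₂ * x₃) - (3 * (x₁ + x₂ + x₃) / (2 * (x₁ * x₂ * x₃))) * w ^ 2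
    + ((x₁ ^ 2 + x₂ ^ 2 + x₃ ^ 2 + 3 * x₁ * x₂ + 3 * x₂ * x₃ + 3 * x₁ * x₃)
        / (2 * (x₁ * x₂ * x₃))) * w
    - (1 / 4) * (x₁ + x₂ + x₃) * (1 / x₁ + 1 / x₂ + 1 / x₃)

/-- The real polynomial `R₃ = B₂,₃`. -/
noncomputable def R3 (ζ t s : ℝ) : ℝ :=
  ζ ^ 3 / (t * s) - (3 / 2) * (1 / t + 1 / s) * ζ ^ 2
    + (t / (2 * s) + s / (2 * t) + 3 / 2) * ζ - (t + s) / 4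

/-- The hermitian weight `h₂(z,τ)` for the theta bundle. -/
noncomputable def h2 (z τ : ℂ) : ℝ :=
  Real.exp (-2 * Real.pi * z.im ^ 2 / τ.im + 2 * Real.pi * (z - τ / 6).im)

/-- The hermitian weight `h₃(z,τ,σ)`. -/
noncomputable def h3 (z τ σ : ℂ) : ℝ :=
  Real.exp (-(2 * Real.pi / 3) * R3 z.im τ.im σ.im)

/-- The finite product of theta functions `Δ` with parameters `A₁ = α₁(x)`, `A₂ = α₂(x)`,
`A₃ = α₃(x)` and first framing coordinate `m = μ(a)`:
`∏_{j=0}^{m-1} θ₀((w+jA₁)/A₃, A₂/A₃)` for `m ≥ 0` and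
`(∏_{j=m}^{-1} θ₀((w+jA₁)/A₃, A₂/A₃))⁻¹` for `m < 0`. -/
noncomputable def DeltaInt (w A₁ A₂ A₃ : ℂ) (m : ℤ) : ℂ :=
  if 0 ≤ m then
    ∏ j ∈ Finset.range m.toNat, theta0 ((w + (j : ℂ) * A₁) / A₃) (A₂ / A₃)
  else
    (∏ j ∈ Finset.range (-m).toNat, theta0 ((w - ((j : ℂ) + 1) * A₁) / A₃) (A₂ / A₃))⁻¹


/-- `(α₁,α₂,α₃)` is the framing basis at `a`: an oriented `ℤ`-basis of `ℤ³` (determinant 1)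
with `α₁·a = 1` and `α₂·a = α₃·a = 0`. -/
def IsFraming (a α₁ α₂ α₃ : V) : Prop :=
  Matrix.det (Matrix.of ![α₁, α₂, α₃]) = 1 ∧
  dotZ α₁ a = 1 ∧ dotZ α₂ a = 0 ∧ dotZ α₃ a = 0

open Complex Finset
open scoped Real

section IntervalProd

variable {M : Type*} [CommGroupWithZero M] (F G : ℤ → M) (a b c : ℤ)

/-- `∏_{a ≤ j < b} F j`, or `(∏_{b ≤ j < a} F j)⁻¹` when `b < a`: one of the two products is
always empty. -/
noncomputable def intervalProd : M := (∏ j ∈ Ico a b, F j) / ∏ j ∈ Ico b a, F j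

lemma intervalProd_of_le (h : a ≤ b) : intervalProd F a b = ∏ j ∈ Ico a b, F j := by
  rw [intervalProd, Ico_eq_empty_of_le h, prod_empty, div_one]

lemma intervalProd_swap : intervalProd F b a = (intervalProd F a b)⁻¹ := by
  rw [intervalProd, intervalProd, inv_div]

lemma intervalProd_add_one : intervalProd F a (a + 1) = F a := by
  rw [intervalProd_of_le F a _ (by omega), show Ico a (a + 1) = {a} by ext; simp; omega,
    prod_singleton]

lemma intervalProd_mul : intervalProd (fun j => F j * G j) a b =
    intervalProd F a b * intervalProd G a b := by
  simp only [intervalProd, prod_mul_distrib, mul_div_mul_comm]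

lemma intervalProd_comp_add_left :
    intervalProd (fun j => F (c + j)) a b = intervalProd F (c + a) (c + b) := by
  simp only [intervalProd, add_comm c, prod_Ico_add']

variable {F a b c}

lemma intervalProd_ne_zero (hF : ∀ j, min a b ≤ j → j < max a b → F j ≠ 0) :
    intervalProd F a b ≠ 0 := by
  have hprod : ∀ s t, min a b ≤ s → t ≤ max a b → ∏ j ∈ Ico s t, F j ≠ 0 := fun s t hs ht =>
    prod_ne_zero_iff.mpr fun j hj => by rw [mem_Ico] at hj; exact hF j (by omega) (by omega)
  exact div_ne_zero (hprod a b (min_le_left a b) (le_max_right a b))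
    (hprod b a (min_le_right a b) (le_max_left a b))

lemma intervalProd_mul_intervalProd_of_le (hab : a ≤ b) (hbc : b ≤ c) :
    intervalProd F a b * intervalProd F b c = intervalProd F a c := by
  rw [intervalProd_of_le F a b hab, intervalProd_of_le F b c hbc,
    intervalProd_of_le F a c (hab.trans hbc), ← prod_union (Ico_disjoint_Ico_consecutive a b c),
    Ico_union_Ico_eq_Ico hab hbc]

lemma intervalProd_eq_div (hca : c ≤ a) (hcb : c ≤ b)
    (hF : ∀ j, c ≤ j → j < max a b → F j ≠ 0) :
    intervalProd F a b = intervalProd F c b / intervalProd F c a := by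
  have hne : ∀ t, c ≤ t → t ≤ max a b → intervalProd F c t ≠ 0 := fun t hct ht =>
    intervalProd_ne_zero fun j hj hj' => hF j (by omega) (by omega)
  rcases le_total a b with hab | hba
  · rw [← intervalProd_mul_intervalProd_of_le hca hab,
      mul_div_cancel_left₀ _ (hne a hca (le_max_left a b))]
  · rw [intervalProd_swap, ← intervalProd_mul_intervalProd_of_le hcb hba,
      div_mul_cancel_left₀ (hne b hcb (le_max_right a b))]

lemma intervalProd_mul_intervalProd
    (hF : ∀ j, min a (min b c) ≤ j → j < max a (max b c) → F j ≠ 0) :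
    intervalProd F a b * intervalProd F b c = intervalProd F a c := by
  set l := min a (min b c)
  have hdiv : ∀ s t, l ≤ s → l ≤ t → max s t ≤ max a (max b c) →
      intervalProd F s t = intervalProd F l t / intervalProd F l s := fun s t hs ht h =>
    intervalProd_eq_div hs ht fun j hj hj' => hF j hj (by omega)
  have hb : intervalProd F l b ≠ 0 :=
    intervalProd_ne_zero fun j hj hj' => hF j (by omega) (by omega)
  rw [hdiv a b (by omega) (by omega) (by omega), hdiv b c (by omega) (by omega) (by omega),
    hdiv a c (by omega) (by omega) (by omega), div_mul_div_cancel₀' hb]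

end IntervalProd

lemma intervalProd_exp_affine (u v : ℂ) (n : ℤ) :
    intervalProd (fun j => exp (u + v * j)) 0 n = exp (n * u + v * (n * (n - 1) / 2)) := by
  set E : ℤ → ℂ := fun j => exp (u + v * j)
  have hsucc : ∀ k : ℤ, intervalProd E 0 (k + 1) = intervalProd E 0 k * E k := fun k => by
    rw [← intervalProd_mul_intervalProd (b := k) fun _ _ _ => exp_ne_zero _,
      intervalProd_add_one]
  induction n using Int.induction_on with
  | zero => simp [intervalProd]
  | succ k ih =>
    rw [hsucc, ih, ← exp_add]
    congr 1
    push_cast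
    ring
  | pred k ih =>
    have h := hsucc (-k - 1)
    rw [sub_add_cancel, ih] at h
    rw [eq_div_of_mul_eq (exp_ne_zero _) h.symm, ← exp_sub]
    congr 1
    push_cast
    ring

lemma multipliable_one_sub_pow_mul {q : ℂ} (hq : ‖q‖ < 1) (c : ℂ) :
    Multipliable fun j : ℕ => 1 - q ^ j * c := by
  have hsum : Summable fun j : ℕ => ‖-(q ^ j * c)‖ := by
    simpa [norm_mul, norm_pow, mul_comm] using
      (summable_geometric_of_lt_one (norm_nonneg q) hq).mul_left ‖c‖
  simpa [sub_eq_add_neg] using multipliable_one_add_of_summable hsum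

noncomputable def qTheta (q u : ℂ) : ℂ := ∏' j : ℕ, (1 - q ^ (j + 1) * u⁻¹) * (1 - q ^ j * u)

lemma theta0_eq_qTheta (z τ : ℂ) :
    theta0 z τ = qTheta (exp (2 * π * I * τ)) (exp (2 * π * I * z)) := by
  refine tprod_congr fun j => ?_
  rw [← exp_nat_mul, ← exp_nat_mul, ← exp_neg, ← exp_add, ← exp_add]
  congr 3 <;> push_cast <;> ring

lemma qTheta_mul_self {q : ℂ} (hq : ‖q‖ < 1) (hq0 : q ≠ 0) {u : ℂ} (hu : u ≠ 0) :
    qTheta q (u * q) = -u⁻¹ * qTheta q u := by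
  have hM : ∀ c, Multipliable fun j : ℕ => 1 - q ^ (j + 1) * c := fun c =>
    (multipliable_one_sub_pow_mul hq (q * c)).congr fun j => by ring
  have hsplit : ∀ c, ∏' j : ℕ, (1 - q ^ j * c) = (1 - c) * ∏' j : ℕ, (1 - q ^ (j + 1) * c) :=
    fun c => by
      rw [tprod_eq_zero_mul' (f := fun j : ℕ => 1 - q ^ j * c) (hM c), pow_zero, one_mul]
  have hshift : qTheta q (u * q) = ∏' j : ℕ, (1 - q ^ j * u⁻¹) * (1 - q ^ (j + 1) * u) :=
    tprod_congr fun j => by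
      congr 1
      · rw [pow_succ, mul_inv, mul_mul_mul_comm, mul_inv_cancel₀ hq0, mul_one]
      · ring
  rw [hshift, qTheta, (multipliable_one_sub_pow_mul hq _).tprod_mul (hM u),
    (hM _).tprod_mul (multipliable_one_sub_pow_mul hq _), hsplit, hsplit]
  field_simp
  ring

lemma norm_exp_two_pi_I_mul_lt_one {τ : ℂ} (hτ : 0 < τ.im) : ‖exp (2 * π * I * τ)‖ < 1 := by
  rw [norm_exp, Real.exp_lt_one_iff]
  simp only [mul_re, mul_im, ofReal_re, ofReal_im, I_re, I_im, re_ofNat, im_ofNat]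
  nlinarith [Real.pi_pos]

lemma theta0_add_int (z τ : ℂ) (k : ℤ) : theta0 (z + k) τ = theta0 z τ := by
  rw [theta0_eq_qTheta, theta0_eq_qTheta, mul_add, exp_add, mul_comm _ (k : ℂ),
    exp_int_mul_two_pi_mul_I, mul_one]

lemma theta0_add_self {τ : ℂ} (hτ : 0 < τ.im) (z : ℂ) :
    theta0 (z + τ) τ = exp (2 * π * I * (1 / 2 - z)) * theta0 z τ := by
  rw [theta0_eq_qTheta, theta0_eq_qTheta, mul_add, exp_add,
    qTheta_mul_self (norm_exp_two_pi_I_mul_lt_one hτ) (exp_ne_zero _) (exp_ne_zero _),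
    mul_sub, exp_sub, show 2 * π * I * (1 / 2) = π * I by ring, exp_pi_mul_I, neg_div, one_div]

lemma theta0_add_int_mul {τ : ℂ} (hτ : 0 < τ.im) (m : ℤ) (z : ℂ) :
    theta0 (z + m * τ) τ =
      exp (2 * π * I * (m / 2 - m * z - m * (m - 1) / 2 * τ)) * theta0 z τ := by
  induction m using Int.induction_on with
  | zero => simp
  | succ k ih =>
    rw [show z + ((k + 1 : ℤ) : ℂ) * τ = z + ((k : ℤ) : ℂ) * τ + τ by push_cast; ring,
      theta0_add_self hτ, ih, ← mul_assoc, ← exp_add]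
    congr 2
    push_cast
    ring
  | pred k ih =>
    have h := theta0_add_self hτ (z + ((-k - 1 : ℤ) : ℂ) * τ)
    rw [show z + ((-k - 1 : ℤ) : ℂ) * τ + τ = z + ((-k : ℤ) : ℂ) * τ by push_cast; ring, ih] at h
    rw [(eq_inv_mul_iff_mul_eq₀ (exp_ne_zero _)).mpr h.symm, ← exp_neg, ← mul_assoc, ← exp_add]
    congr 2
    push_cast
    ring

lemma DeltaInt_eq_intervalProd (w A₁ A₂ A₃ : ℂ) (m : ℤ) :
    DeltaInt w A₁ A₂ A₃ m =
      intervalProd (fun j : ℤ => theta0 ((w + j * A₁) / A₃) (A₂ / A₃)) 0 m := by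
  unfold DeltaInt intervalProd
  split_ifs with hm
  · rw [Ico_eq_empty_of_le hm, prod_empty, div_one]
    refine prod_nbij' (fun j => (j : ℤ)) Int.toNat ?_ ?_ ?_ ?_ ?_ <;> intros <;> simp_all
  · rw [Ico_eq_empty_of_le (by omega), prod_empty, one_div]
    congr 1
    refine prod_nbij' (fun j => -((j : ℤ) + 1)) (fun j => (-j - 1).toNat) ?_ ?_ ?_ ?_ ?_ <;>
      intros <;> simp_all
    · omega
    · ring_nf

theorem DeltaInt_add (w A₁ A₂ A₃ : ℂ) (m₁ m₂ m₃ n₁ : ℤ) (hτ : 0 < (A₂ / A₃).im)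
    (hθ : ∀ j : ℤ, -(|m₁| + |n₁|) ≤ j → j ≤ |m₁| + |n₁| →
      theta0 ((w + j * A₁) / A₃) (A₂ / A₃) ≠ 0) :
    DeltaInt w A₁ A₂ A₃ (m₁ + n₁) =
      exp (2 * π * I * ((n₁ * m₂ / A₃) *
          (w + ((2 * m₁ + n₁ - 1) / 2) * A₁ + ((m₂ - 1) / 2) * A₂ + A₃ / 2))) *
        DeltaInt w A₁ A₂ A₃ m₁ * DeltaInt (w + (m₁ * A₁ + m₂ * A₂ + m₃ * A₃)) A₁ A₂ A₃ n₁ := by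
  have hA₃ : A₃ ≠ 0 := by rintro rfl; simp at hτ
  rw [DeltaInt_eq_intervalProd, DeltaInt_eq_intervalProd, DeltaInt_eq_intervalProd]
  set τ := A₂ / A₃
  set F : ℤ → ℂ := fun j => theta0 ((w + j * A₁) / A₃) τ
  set u : ℂ := 2 * π * I * (m₂ / 2 - m₂ * ((w + m₁ * A₁) / A₃) - m₂ * (m₂ - 1) / 2 * τ)
  set v : ℂ := 2 * π * I * (-m₂ * (A₁ / A₃))
  have hshift : ∀ j : ℤ, theta0 ((w + (m₁ * A₁ + m₂ * A₂ + m₃ * A₃) + j * A₁) / A₃) τ =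
      exp (u + v * j) * F (m₁ + j) := fun j => by
    rw [show (w + (m₁ * A₁ + m₂ * A₂ + m₃ * A₃) + j * A₁) / A₃ =
        (w + ((m₁ + j : ℤ) : ℂ) * A₁) / A₃ + m₂ * τ + m₃ by
          simp only [τ]; push_cast; field_simp; ring,
      theta0_add_int, theta0_add_int_mul hτ]
    congr 2
    simp only [u, v, τ]
    push_cast
    field_simp
    ring
  have hν : intervalProd (fun j : ℤ =>
      theta0 ((w + (m₁ * A₁ + m₂ * A₂ + m₃ * A₃) + j * A₁) / A₃) τ) 0 n₁ =
      exp (n₁ * u + v * (n₁ * (n₁ - 1) / 2)) * intervalProd F m₁ (m₁ + n₁) := by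
    rw [funext hshift, intervalProd_mul, intervalProd_exp_affine, intervalProd_comp_add_left,
      add_zero]
  have hchasles :
      intervalProd F 0 (m₁ + n₁) = intervalProd F 0 m₁ * intervalProd F m₁ (m₁ + n₁) :=
    (intervalProd_mul_intervalProd fun j h₁ h₂ => by
      apply hθ <;> rcases abs_cases m₁ with hm | hm <;> rcases abs_cases n₁ with hn | hn <;>
        omega).symm
  have hexp : exp (2 * π * I * ((n₁ * m₂ / A₃) *
      (w + ((2 * m₁ + n₁ - 1) / 2) * A₁ + ((m₂ - 1) / 2) * A₂ + A₃ / 2))) *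
      exp (n₁ * u + v * (n₁ * (n₁ - 1) / 2)) = 1 := by
    rw [← exp_add, exp_eq_one_iff]
    refine ⟨n₁ * m₂, ?_⟩
    simp only [u, v, τ]
    push_cast
    field_simp
    ring
  rw [hν, hchasles]
  linear_combination (-(intervalProd F 0 m₁ * intervalProd F m₁ (m₁ + n₁))) * hexp

lemma pairZ_add (α β : V) (x : Fin 3 → ℂ) : pairZ (α + β) x = pairZ α x + pairZ β x := by
  simp only [pairZ, Pi.add_apply]
  push_cast
  ring

lemma pairZ_smul (k : ℤ) (α : V) (x : Fin 3 → ℂ) : pairZ (k • α) x = k * pairZ α x := by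
  simp only [pairZ, Pi.smul_apply, smul_eq_mul]
  push_cast
  ring

theorem statement8_general (α₁ α₂ α₃ : V)
    (x : Fin 3 → ℂ) (hx : 0 < (pairZ α₂ x / pairZ α₃ x).im) (w : ℂ)
    (m₁ m₂ m₃ n₁ : ℤ)
    (μ : V) (hμ : μ = m₁ • α₁ + m₂ • α₂ + m₃ • α₃)
    (hθ : ∀ j : ℤ, -(|m₁| + |n₁|) ≤ j → j ≤ |m₁| + |n₁| →
      theta0 ((w + (j : ℂ) * pairZ α₁ x) / pairZ α₃ x) (pairZ α₂ x / pairZ α₃ x) ≠ 0 ∧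
      theta0 ((w + pairZ μ x + (j : ℂ) * pairZ α₁ x) / pairZ α₃ x)
        (pairZ α₂ x / pairZ α₃ x) ≠ 0) :
    DeltaInt w (pairZ α₁ x) (pairZ α₂ x) (pairZ α₃ x) (m₁ + n₁) =
      Complex.exp (2 * (Real.pi : ℂ) * Complex.I *
          (((n₁ : ℂ) * (m₂ : ℂ) / pairZ α₃ x) *
            (w + ((2 * (m₁ : ℂ) + (n₁ : ℂ) - 1) / 2) * pairZ α₁ x +
              (((m₂ : ℂ) - 1) / 2) * pairZ α₂ x + pairZ α₃ x / 2))) *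
        DeltaInt w (pairZ α₁ x) (pairZ α₂ x) (pairZ α₃ x) m₁ *
        DeltaInt (w + pairZ μ x) (pairZ α₁ x) (pairZ α₂ x) (pairZ α₃ x) n₁ := by
  subst hμ
  rw [pairZ_add, pairZ_add, pairZ_smul, pairZ_smul, pairZ_smul]
  exact DeltaInt_add _ _ _ _ m₁ m₂ m₃ n₁ hx fun j h₁ h₂ => (hθ j h₁ h₂).1

/-- the cocycle identity
`Δ_a(μ+ν;w,x) = e^{2πi P_a(μ,ν;w,x)} Δ_a(μ;w,x) Δ_a(ν;w+μ(x),x)`. -/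
theorem statement8 (a : V) (ha : Primitive a) (α₁ α₂ α₃ : V)
    (hfr : IsFraming a α₁ α₂ α₃)
    (x : Fin 3 → ℂ) (hx : 0 < (pairZ α₂ x / pairZ α₃ x).im) (w : ℂ)
    (m₁ m₂ m₃ n₁ n₂ n₃ : ℤ)
    (μ ν : V) (hμ : μ = m₁ • α₁ + m₂ • α₂ + m₃ • α₃) (hν : ν = n₁ • α₁ + n₂ • α₂ + n₃ • α₃)
    (hθ : ∀ j : ℤ, -(|m₁| + |n₁|) ≤ j → j ≤ |m₁| + |n₁| →
      theta0 ((w + (j : ℂ) * pairZ α₁ x) / pairZ α₃ x) (pairZ α₂ x / pairZ α₃ x) ≠ 0 ∧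
      theta0 ((w + pairZ μ x + (j : ℂ) * pairZ α₁ x) / pairZ α₃ x)
        (pairZ α₂ x / pairZ α₃ x) ≠ 0) :
    DeltaInt w (pairZ α₁ x) (pairZ α₂ x) (pairZ α₃ x) (m₁ + n₁) =
      Complex.exp (2 * (Real.pi : ℂ) * Complex.I *
          (((n₁ : ℂ) * (m₂ : ℂ) / pairZ α₃ x) *
            (w + ((2 * (m₁ : ℂ) + (n₁ : ℂ) - 1) / 2) * pairZ α₁ x +
              (((m₂ : ℂ) - 1) / 2) * pairZ α₂ x + pairZ α₃ x / 2))) *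
        DeltaInt w (pairZ α₁ x) (pairZ α₂ x) (pairZ α₃ x) m₁ *
        DeltaInt (w + pairZ μ x) (pairZ α₁ x) (pairZ α₂ x) (pairZ α₃ x) n₁ :=
  statement8_general α₁ α₂ α₃ x hx w m₁ m₂ m₃ n₁ μ hμ hθ

end EGG
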